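/- arXiv:2408.03118 — 2 statements merged into one kernel-verified Lean document; each statement's English description precedes it below -/
import Mathlib

section
/- (De la Vallée Poussin criterion, necessity) Let σ be a finite measure and {f_i}_{i∈I} ⊆ L¹(σ) a uniformly integrable family. Then there exists a nondecreasing function φ : [0,∞) → [0,∞) with lim_{t→∞} φ(t)/t = +∞ and a constant C such that ∫ φ(|f_i|) dσ ≤ C for all i ∈ I. -/
/-!
Given uniform integrability, pick levels `M n → ∞` with `∫_{M n ≤ |f i|} |f i| < 2⁻ⁿ` for all `i`,
and take `φ t = ∑ₙ (t - M n)⁺`. Each ramp `(t - M n)⁺` is bounded by `t` on `{M n ≤ t}` and vanishes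
elsewhere, so `∫ φ(|f i|) ≤ ∑ₙ 2⁻ⁿ = 2`; and `φ t ≥ k t - ∑_{n<k} M n` for every `k`, so `φ t / t → ∞`.
-/

open MeasureTheory Filter Topology

noncomputable section

-- `tsum` takes the junk value `0` unless `M n → ∞`, which makes the sum finite.
def rampSum (M : ℕ → ℝ) (t : ℝ) : ℝ := ∑' n, (t - M n)⁺

namespace rampSum

variable {M : ℕ → ℝ}

theorem summable (hM : Tendsto M atTop atTop) (t : ℝ) : Summable fun n => (t - M n)⁺ := by
  have hlarge : ∀ᶠ n in cofinite, t ≤ M n := Nat.cofinite_eq_atTop ▸ hM.eventually_ge_atTop t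
  exact summable_of_hasFiniteSupport <|
    (eventually_cofinite.1 hlarge).subset fun _ hn hle => hn (posPart_eq_zero.2 (by linarith))

theorem nonneg (M : ℕ → ℝ) (t : ℝ) : 0 ≤ rampSum M t :=
  tsum_nonneg fun _ => posPart_nonneg _

theorem monotone (hM : Tendsto M atTop atTop) : Monotone (rampSum M) := fun _ _ hab =>
  (summable hM _).tsum_le_tsum (fun _ => posPart_mono (sub_le_sub_right hab _)) (summable hM _)

theorem mul_sub_sum_le (hM : Tendsto M atTop atTop) (k : ℕ) (t : ℝ) :
    k * t - ∑ n ∈ Finset.range k, M n ≤ rampSum M t :=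
  calc k * t - ∑ n ∈ Finset.range k, M n = ∑ n ∈ Finset.range k, (t - M n) := by
        simp [Finset.sum_sub_distrib]
    _ ≤ ∑ n ∈ Finset.range k, (t - M n)⁺ := Finset.sum_le_sum fun _ _ => le_posPart _
    _ ≤ rampSum M t := (summable hM t).sum_le_tsum _ fun _ _ => posPart_nonneg _

theorem tendsto_div_atTop (hM : Tendsto M atTop atTop) :
    Tendsto (fun t => rampSum M t / t) atTop atTop := by
  refine tendsto_atTop.2 fun b => ?_
  obtain ⟨k, hk⟩ := exists_nat_gt b
  set S := ∑ n ∈ Finset.range k, M n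
  have hlim : Tendsto (fun t : ℝ => k - S / t) atTop (𝓝 k) := by
    simpa using tendsto_const_nhds.sub ((tendsto_const_nhds (x := S)).div_atTop tendsto_id)
  filter_upwards [hlim.eventually_const_lt hk, eventually_gt_atTop 0] with t hbt ht
  calc b ≤ k - S / t := hbt.le
    _ = (k * t - S) / t := by field_simp
    _ ≤ rampSum M t / t := by gcongr; exact mul_sub_sum_le hM k t

end rampSum

section Lintegral

variable {X : Type*} [MeasurableSpace X] {μ : Measure X}

theorem lintegral_ofReal_posPart_sub_le {c : ℝ} (hc : 0 ≤ c) (g : X → ℝ) :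
    ∫⁻ x, ENNReal.ofReal (g x - c)⁺ ∂μ ≤ ∫⁻ x in {x | c ≤ g x}, ENNReal.ofReal (g x) ∂μ := by
  refine le_trans (lintegral_mono fun x => ?_) (lintegral_indicator_le _ _)
  by_cases hx : c ≤ g x
  · rw [Set.indicator_of_mem (show x ∈ {x | c ≤ g x} from hx)]
    exact ENNReal.ofReal_le_ofReal (sup_le (by linarith) (by linarith))
  · rw [Set.indicator_of_notMem (show x ∉ {x | c ≤ g x} from hx),
      posPart_eq_zero.2 (by linarith), ENNReal.ofReal_zero]

theorem lintegral_ofReal_rampSum_le {M : ℕ → ℝ} (hM : Tendsto M atTop atTop) (hM₀ : ∀ n, 0 ≤ M n)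
    {g : X → ℝ} (hg : AEMeasurable g μ) :
    ∫⁻ x, ENNReal.ofReal (rampSum M (g x)) ∂μ ≤
      ∑' n, ∫⁻ x in {x | M n ≤ g x}, ENNReal.ofReal (g x) ∂μ :=
  calc ∫⁻ x, ENNReal.ofReal (rampSum M (g x)) ∂μ
      = ∫⁻ x, ∑' n, ENNReal.ofReal (g x - M n)⁺ ∂μ := by
        simp only [rampSum, ENNReal.ofReal_tsum_of_nonneg (fun _ => posPart_nonneg _)
          (rampSum.summable hM _)]
    _ = ∑' n, ∫⁻ x, ENNReal.ofReal (g x - M n)⁺ ∂μ :=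
        lintegral_tsum fun n => (hg.sub_const _).posPart.ennreal_ofReal
    _ ≤ _ := ENNReal.tsum_le_tsum fun n => lintegral_ofReal_posPart_sub_le (hM₀ n) g

end Lintegral

end

theorem deLaValleePoussin_necessity_general
    {X : Type*} [MeasurableSpace X] (σ : Measure X)
    {ι : Type*} (f : ι → X → ℝ)
    (hint : ∀ i, Integrable (f i) σ)
    (hui : ∀ ε > (0 : ℝ), ∃ M : ℝ, ∀ i,
      ∫ x in {x | M ≤ |f i x|}, |f i x| ∂σ < ε) :
    ∃ φ : ℝ → ℝ, (∀ t, 0 ≤ t → 0 ≤ φ t) ∧ MonotoneOn φ (Set.Ici 0) ∧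
      Filter.Tendsto (fun t => φ t / t) Filter.atTop Filter.atTop ∧
      ∃ C : ℝ, ∀ i, ∫⁻ x, ENNReal.ofReal (φ |f i x|) ∂σ ≤ ENNReal.ofReal C := by
  choose M₀ hM₀ using fun n : ℕ => hui ((1 / 2) ^ n) (by positivity)
  set M : ℕ → ℝ := fun n => max (M₀ n) n
  have hM : Tendsto M atTop atTop :=
    tendsto_atTop_mono (fun n => le_max_right _ _) tendsto_natCast_atTop_atTop
  have hMnonneg (n : ℕ) : 0 ≤ M n := (Nat.cast_nonneg n).trans (le_max_right _ _)
  have htail (n : ℕ) (i : ι) :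
      ∫⁻ x in {x | M n ≤ |f i x|}, ENNReal.ofReal |f i x| ∂σ ≤ ENNReal.ofReal ((1 / 2) ^ n) := by
    rw [← ofReal_integral_eq_lintegral_ofReal (hint i).abs.integrableOn
      (ae_of_all _ fun _ => abs_nonneg _)]
    refine ENNReal.ofReal_le_ofReal (le_trans ?_ (hM₀ n i).le)
    exact setIntegral_mono_set (hint i).abs.integrableOn (ae_of_all _ fun _ => abs_nonneg _)
      (ae_of_all _ fun x hx => (le_max_left _ _).trans hx)
  refine ⟨rampSum M, fun t _ => rampSum.nonneg M t, (rampSum.monotone hM).monotoneOn _,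
    rampSum.tendsto_div_atTop hM, 2, fun i => ?_⟩
  calc ∫⁻ x, ENNReal.ofReal (rampSum M |f i x|) ∂σ
      ≤ ∑' n, ENNReal.ofReal ((1 / 2) ^ n) :=
        (lintegral_ofReal_rampSum_le hM hMnonneg (hint i).abs.aemeasurable).trans
          (ENNReal.tsum_le_tsum fun n => htail n i)
    _ = ENNReal.ofReal 2 := by
        rw [← ENNReal.ofReal_tsum_of_nonneg (fun n => by positivity) summable_geometric_two,
          tsum_geometric_two]

theorem deLaValleePoussin_necessity
    {X : Type*} [MeasurableSpace X] (σ : Measure X) [IsFiniteMeasure σ]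
    {ι : Type*} (f : ι → X → ℝ)
    (hint : ∀ i, Integrable (f i) σ)
    (hui : ∀ ε > (0 : ℝ), ∃ M : ℝ, ∀ i,
      ∫ x in {x | M ≤ |f i x|}, |f i x| ∂σ < ε) :
    ∃ φ : ℝ → ℝ, (∀ t, 0 ≤ t → 0 ≤ φ t) ∧ MonotoneOn φ (Set.Ici 0) ∧
      Filter.Tendsto (fun t => φ t / t) Filter.atTop Filter.atTop ∧
      ∃ C : ℝ, ∀ i, ∫⁻ x, ENNReal.ofReal (φ |f i x|) ∂σ ≤ ENNReal.ofReal C :=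
  deLaValleePoussin_necessity_general σ f hint hui
end

section
/- Let f_n ⇀ f weakly in L¹(σ) for a probability measure σ, with f_n ≥ 0. Then liminf_n ∫ H(f_n) dσ ≥ ∫ H(f) dσ, where H(s) = s(log s − 1) + 1. -/
/-!
`H` is Mathlib's `klFun`, convex with derivative `log`, so on `[0, ∞)` it lies above each of
its tangent lines `s ↦ s log c + 1 - c`, `c > 0`. A tangent line is affine in `s` with slope
`log c`; if that slope is a bounded function of `x`, the integral of the tangent line along `fₙ`
converges to the one along `g` by weak convergence, while staying below `∫ H(fₙ)`. Taking `c` to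
be `g(x)` clamped to `[e⁻ᵐ, eᵐ]` makes the slope bounded by `m`, and as `m → ∞` these tangent
lines converge pointwise to `H(g)` (to `+∞` where `g < 0`), so Fatou's lemma in `m` concludes.
-/

open MeasureTheory Filter
open scoped ENNReal

noncomputable def Hfun : ℝ → ℝ := fun s => if s = 0 then 1 else s * (Real.log s - 1) + 1

open Real InformationTheory

lemma Hfun_eq_klFun : Hfun = klFun := by
  ext s
  rcases eq_or_ne s 0 with rfl | hs
  · simp [Hfun, klFun_zero]
  · simp only [Hfun, klFun, if_neg hs]
    ring

/-- The tangent line of `klFun` at `c` (recall `deriv klFun = log`), evaluated at `s`. -/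
noncomputable def klFunTangent (c s : ℝ) : ℝ := s * log c + (1 - c)

lemma klFun_add_log_mul_sub (c s : ℝ) : klFun c + log c * (s - c) = klFunTangent c s := by
  rw [klFun, klFunTangent]
  ring

lemma klFunTangent_le_klFun {c s : ℝ} (hc : 0 < c) (hs : 0 ≤ s) :
    klFunTangent c s ≤ klFun s := by
  rcases hs.eq_or_lt with rfl | hs
  · simp [klFunTangent, klFun_zero, hc.le]
  · have hlog := mul_le_mul_of_nonneg_left (log_le_sub_one_of_pos (div_pos hc hs)) hs.le
    rw [log_div hc.ne' hs.ne', mul_sub_one, mul_div_cancel₀ _ hs.ne'] at hlog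
    rw [klFunTangent, klFun]
    linarith

noncomputable def clampExp (m : ℕ) (s : ℝ) : ℝ := min (max s (exp (-m))) (exp m)

section clampExp

variable (m : ℕ) (s : ℝ)

lemma exp_neg_le_exp_natCast : exp (-m) ≤ exp m :=
  exp_le_exp.2 (neg_le_self m.cast_nonneg)

lemma exp_neg_le_clampExp : exp (-m) ≤ clampExp m s :=
  le_min (le_max_right _ _) (exp_neg_le_exp_natCast m)

lemma clampExp_le_exp : clampExp m s ≤ exp m := min_le_right _ _

lemma clampExp_pos : 0 < clampExp m s := (exp_pos _).trans_le (exp_neg_le_clampExp m s)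

lemma abs_log_clampExp_le : |log (clampExp m s)| ≤ m :=
  abs_le.2 ⟨(le_log_iff_exp_le (clampExp_pos m s)).2 (exp_neg_le_clampExp m s),
    (log_le_iff_le_exp (clampExp_pos m s)).2 (clampExp_le_exp m s)⟩

lemma measurable_clampExp : Measurable (clampExp m) := by
  unfold clampExp
  fun_prop

variable {m s}

lemma clampExp_of_le_exp_neg (h : s ≤ exp (-m)) : clampExp m s = exp (-m) := by
  rw [clampExp, max_eq_right h, min_eq_left (exp_neg_le_exp_natCast m)]

lemma clampExp_of_mem (h₁ : exp (-m) ≤ s) (h₂ : s ≤ exp m) : clampExp m s = s := by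
  rw [clampExp, max_eq_left h₁, min_eq_left h₂]

lemma clampExp_of_exp_le (h : exp m ≤ s) : clampExp m s = exp m := by
  rw [clampExp, max_eq_left ((exp_neg_le_exp_natCast m).trans h), min_eq_right h]

end clampExp

lemma klFunTangent_clampExp_nonneg (m : ℕ) (s : ℝ) : 0 ≤ klFunTangent (clampExp m s) s := by
  have hm : (0 : ℝ) ≤ m := m.cast_nonneg
  have hslope : 0 ≤ log (clampExp m s) * (s - clampExp m s) := by
    rcases le_total s (exp (-m)) with h₁ | h₁
    · rw [clampExp_of_le_exp_neg h₁, log_exp]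
      nlinarith
    rcases le_total s (exp m) with h₂ | h₂
    · simp [clampExp_of_mem h₁ h₂]
    · rw [clampExp_of_exp_le h₂, log_exp]
      nlinarith
  rw [← klFun_add_log_mul_sub]
  exact add_nonneg (klFun_nonneg (clampExp_pos m s).le) hslope

lemma tendsto_klFunTangent_clampExp {s : ℝ} (hs : 0 ≤ s) :
    Tendsto (fun m : ℕ => klFunTangent (clampExp m s) s) atTop (nhds (klFun s)) := by
  rcases hs.eq_or_lt with rfl | hs
  · have hzero (m : ℕ) : klFunTangent (clampExp m 0) 0 = 1 - exp (-m) := by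
      rw [clampExp_of_le_exp_neg (exp_pos _).le, klFunTangent]
      ring
    simp only [hzero, klFun_zero]
    simpa using (tendsto_exp_neg_atTop_nhds_zero.comp tendsto_natCast_atTop_atTop).const_sub 1
  · refine tendsto_const_nhds.congr' ?_
    filter_upwards [eventually_ge_atTop ⌈|log s|⌉₊] with m hm
    obtain ⟨hlow, hup⟩ := abs_le.1 ((Nat.le_ceil _).trans (Nat.cast_le.2 hm))
    rw [clampExp_of_mem ((exp_le_exp.2 hlow).trans_eq (exp_log hs))
      ((exp_log hs).symm.le.trans (exp_le_exp.2 hup)), ← klFun_add_log_mul_sub]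
    ring

lemma tendsto_klFunTangent_clampExp_of_neg {s : ℝ} (hs : s < 0) :
    Tendsto (fun m : ℕ => klFunTangent (clampExp m s) s) atTop atTop := by
  have hneg (m : ℕ) : klFunTangent (clampExp m s) s = -s * m + (1 - exp (-m)) := by
    rw [clampExp_of_le_exp_neg (hs.le.trans (exp_pos _).le), klFunTangent, log_exp]
    ring
  simp only [hneg]
  refine tendsto_atTop_mono (fun m => ?_)
    (tendsto_natCast_atTop_atTop.const_mul_atTop (neg_pos.2 hs))
  have : exp (-m) ≤ 1 := exp_le_one_iff.2 (neg_nonpos.2 m.cast_nonneg)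
  linarith

lemma ofReal_klFun_le_liminf_klFunTangent_clampExp (s : ℝ) :
    ENNReal.ofReal (klFun s) ≤
      atTop.liminf fun m : ℕ => ENNReal.ofReal (klFunTangent (clampExp m s) s) := by
  rcases le_or_gt 0 s with hs | hs
  · rw [(ENNReal.tendsto_ofReal (tendsto_klFunTangent_clampExp hs)).liminf_eq]
  · have h := ENNReal.tendsto_ofReal_atTop.comp (tendsto_klFunTangent_clampExp_of_neg hs)
    rw [Function.comp_def] at h
    rw [h.liminf_eq]
    exact le_top

section integral

variable {X : Type*} [MeasurableSpace X] {μ : Measure X}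

lemma ofReal_integral_le_lintegral_ofReal {f : X → ℝ} (hf : Integrable f μ) :
    ENNReal.ofReal (∫ x, f x ∂μ) ≤ ∫⁻ x, ENNReal.ofReal (f x) ∂μ := by
  rw [ENNReal.ofReal_le_iff_le_toReal hf.lintegral_lt_top.ne,
    integral_eq_lintegral_pos_part_sub_lintegral_neg_part hf]
  exact sub_le_self _ ENNReal.toReal_nonneg

theorem ofReal_integral_le_liminf_lintegral_of_tendsto
    {f : ℕ → X → ℝ} {g φ ψ : X → ℝ} {F : ℕ → X → ℝ≥0∞}
    (hf : ∀ n, Integrable (f n) μ) (hg : Integrable g μ) (hφ : MemLp φ ⊤ μ)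
    (hψ : Integrable ψ μ)
    (hlim : Tendsto (fun n => ∫ x, f n x * φ x ∂μ) atTop (nhds (∫ x, g x * φ x ∂μ)))
    (hF : ∀ n, ∀ᵐ x ∂μ, ENNReal.ofReal (f n x * φ x + ψ x) ≤ F n x) :
    ENNReal.ofReal (∫ x, g x * φ x + ψ x ∂μ) ≤
      atTop.liminf fun n => ∫⁻ x, F n x ∂μ := by
  have hint {h : X → ℝ} (hh : Integrable h μ) : Integrable (fun x => h x * φ x + ψ x) μ :=
    (hh.mul_of_top_left hφ).add hψ
  have hsplit {h : X → ℝ} (hh : Integrable h μ) :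
      ∫ x, h x * φ x + ψ x ∂μ = ∫ x, h x * φ x ∂μ + ∫ x, ψ x ∂μ :=
    integral_add (hh.mul_of_top_left hφ) hψ
  have htend : Tendsto (fun n => ENNReal.ofReal (∫ x, f n x * φ x + ψ x ∂μ)) atTop
      (nhds (ENNReal.ofReal (∫ x, g x * φ x + ψ x ∂μ))) := by
    simp only [hsplit (hf _), hsplit hg]
    exact ENNReal.tendsto_ofReal (hlim.add_const _)
  rw [← htend.liminf_eq]
  exact liminf_le_liminf (Eventually.of_forall fun n =>
    (ofReal_integral_le_lintegral_ofReal (hint (hf n))).trans (lintegral_mono_ae (hF n)))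

variable {g : X → ℝ} (m : ℕ)

lemma aemeasurable_klFunTangent_clampExp_comp (hg : AEMeasurable g μ) :
    AEMeasurable (fun x => klFunTangent (clampExp m (g x)) (g x)) μ :=
  ((measurable_id.mul (measurable_log.comp (measurable_clampExp m))).add
    (measurable_const.sub (measurable_clampExp m))).comp_aemeasurable hg

lemma memLp_top_log_clampExp_comp (hg : AEMeasurable g μ) :
    MemLp (fun x => log (clampExp m (g x))) ⊤ μ :=
  memLp_top_of_bound
    ((measurable_log.comp (measurable_clampExp m)).comp_aemeasurable hg).aestronglyMeasurable
    m (Eventually.of_forall fun x => abs_log_clampExp_le m (g x))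

lemma integrable_one_sub_clampExp_comp [IsFiniteMeasure μ] (hg : AEMeasurable g μ) :
    Integrable (fun x => 1 - clampExp m (g x)) μ :=
  (integrable_const 1).sub <| (memLp_top_of_bound
    ((measurable_clampExp m).comp_aemeasurable hg).aestronglyMeasurable (exp m)
    (Eventually.of_forall fun x =>
      (norm_of_nonneg (clampExp_pos m (g x)).le).trans_le (clampExp_le_exp m (g x)))).integrable
    le_top

lemma integrable_klFunTangent_clampExp_comp [IsFiniteMeasure μ] (hg : Integrable g μ) :
    Integrable (fun x => klFunTangent (clampExp m (g x)) (g x)) μ :=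
  (hg.mul_of_top_left (memLp_top_log_clampExp_comp m hg.aemeasurable)).add
    (integrable_one_sub_clampExp_comp m hg.aemeasurable)

end integral

theorem entropy_weak_l1_lsc
    {X : Type*} [MeasurableSpace X] (σ : Measure X) [IsProbabilityMeasure σ]
    (f : ℕ → X → ℝ) (g : X → ℝ)
    (hfint : ∀ n, Integrable (f n) σ) (hgint : Integrable g σ)
    (hf0 : ∀ n x, 0 ≤ f n x)
    (hweak : ∀ φ : X → ℝ, MemLp φ ⊤ σ →
      Tendsto (fun n => ∫ x, f n x * φ x ∂σ) atTop (nhds (∫ x, g x * φ x ∂σ))) :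
    (∫⁻ x, ENNReal.ofReal (Hfun (g x)) ∂σ) ≤
      atTop.liminf (fun n => ∫⁻ x, ENNReal.ofReal (Hfun (f n x)) ∂σ) := by
  simp only [Hfun_eq_klFun]
  have hg := hgint.aemeasurable
  set T : ℕ → X → ℝ := fun m x => klFunTangent (clampExp m (g x)) (g x)
  have hT (m : ℕ) :
      ∫⁻ x, ENNReal.ofReal (T m x) ∂σ ≤
        atTop.liminf fun n => ∫⁻ x, ENNReal.ofReal (klFun (f n x)) ∂σ := by
    rw [← ofReal_integral_eq_lintegral_ofReal (integrable_klFunTangent_clampExp_comp m hgint)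
      (Eventually.of_forall fun x => klFunTangent_clampExp_nonneg m (g x))]
    exact ofReal_integral_le_liminf_lintegral_of_tendsto hfint hgint
      (memLp_top_log_clampExp_comp m hg) (integrable_one_sub_clampExp_comp m hg)
      (hweak _ (memLp_top_log_clampExp_comp m hg)) fun n => Eventually.of_forall fun x =>
        ENNReal.ofReal_le_ofReal (klFunTangent_le_klFun (clampExp_pos m (g x)) (hf0 n x))
  calc ∫⁻ x, ENNReal.ofReal (klFun (g x)) ∂σ
      ≤ ∫⁻ x, atTop.liminf (fun m => ENNReal.ofReal (T m x)) ∂σ :=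
        lintegral_mono fun x => ofReal_klFun_le_liminf_klFunTangent_clampExp (g x)
    _ ≤ atTop.liminf fun m => ∫⁻ x, ENNReal.ofReal (T m x) ∂σ :=
        lintegral_liminf_le' fun m =>
          (aemeasurable_klFunTangent_clampExp_comp m hg).ennreal_ofReal
    _ ≤ _ := liminf_le_of_frequently_le' (Frequently.of_forall hT)
end
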